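/- Let G be a finite simple connected graph without isolated vertices in which every vertex has degree at most 3 and no two vertices of degree 3 are adjacent. If a function λ from the vertex set of G to ℝ satisfies the 5/3-eigenvalue equation, i.e. for every vertex v, 3·∑_{w adjacent to v}(λ(v) − λ(w)) = 5·(deg v)·λ(v), then λ is identically 0 (equivalently, 5/3 is not an eigenvalue of the normalized graph Laplacian of G over ℝ). -/

import Mathlib

open scoped Classical in
/-- The neighborhood of a vertex `v` in a finite simple graph `G`, as a `Finset`. -/
noncomputable def nbr {V : Type*} [Fintype V] (G : SimpleGraph V) (v : V) : Finset V :=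
  Set.toFinset {w | G.Adj v w}

/-- The degree of a vertex: the number of its neighbors. -/
noncomputable def deg {V : Type*} [Fintype V] (G : SimpleGraph V) (v : V) : ℕ :=
  (nbr G v).card

/-- `lam` satisfies the 5/3-eigenvalue equation on `G`:
for every vertex `v`, `3·∑_{w ~ v} (lam v − lam w) = 5·(deg v)·lam v`. -/
def EigenEq {V : Type*} [Fintype V] {R : Type*} [CommRing R]
    (G : SimpleGraph V) (lam : V → R) : Prop :=
  ∀ v : V, (3 : R) * ∑ w ∈ nbr G v, (lam v - lam w) = 5 * ((deg G v : R)) * lam v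

lemma mem_nbr {V : Type*} [Fintype V] (G : SimpleGraph V) (v w : V) :
    w ∈ nbr G v ↔ G.Adj v w := by
  simp [nbr]

/-- Key mod-3 step: any integer solution of `2·deg v·z v + 3·∑_{w~v} z w = 0`
has all values divisible by 3, provided every degree is in `{1,2,3}` and no two
degree-3 vertices are adjacent. -/
lemma dvd_three_of_eq {V : Type*} [Fintype V] (G : SimpleGraph V)
    (hiso : ∀ v : V, 0 < deg G v)
    (hmax : ∀ v : V, deg G v ≤ 3)
    (h33 : ∀ v w : V, G.Adj v w → ¬(deg G v = 3 ∧ deg G w = 3))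
    (z : V → ℤ)
    (heq : ∀ v : V, 2 * (deg G v : ℤ) * z v + 3 * ∑ w ∈ nbr G v, z w = 0) :
    ∀ v : V, (3 : ℤ) ∣ z v := by
  have hp : Prime (3 : ℤ) := by norm_num
  have hsmall : ∀ v : V, deg G v ≤ 2 → (3 : ℤ) ∣ z v := by
    intro v hv
    have h1 : (3 : ℤ) ∣ 2 * (deg G v : ℤ) * z v := by
      refine ⟨-(∑ w ∈ nbr G v, z w), ?_⟩
      have := heq v; linarith
    rcases hp.2.2 _ _ h1 with h | h
    · exfalso
      have h0 := hiso v
      interval_cases h : deg G v <;> norm_num at h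
    · exact h
  intro v
  by_cases hv : deg G v = 3
  · have hnb : ∀ w ∈ nbr G v, (3 : ℤ) ∣ z w := by
      intro w hw
      have hadj : G.Adj v w := (mem_nbr G v w).mp hw
      have hw3 : deg G w ≠ 3 := fun h => h33 v w hadj ⟨hv, h⟩
      exact hsmall w (by have := hmax w; omega)
    have hsum : (3 : ℤ) ∣ ∑ w ∈ nbr G v, z w := Finset.dvd_sum hnb
    have h2 : 2 * z v = -(∑ w ∈ nbr G v, z w) := by
      have := heq v; rw [hv] at this; push_cast at this; linarith
    have h3 : (3 : ℤ) ∣ 2 * z v := h2 ▸ (dvd_neg.mpr hsum)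
    rcases hp.2.2 _ _ h3 with h | h
    · exact absurd h (by norm_num)
    · exact h
  · exact hsmall v (by have := hmax v; omega)

/-- Infinite 3-adic descent: any integer solution is identically zero. -/
lemma int_sol_zero {V : Type*} [Fintype V] (G : SimpleGraph V)
    (hiso : ∀ v : V, 0 < deg G v)
    (hmax : ∀ v : V, deg G v ≤ 3)
    (h33 : ∀ v w : V, G.Adj v w → ¬(deg G v = 3 ∧ deg G w = 3))
    (z : V → ℤ)
    (heq : ∀ v : V, 2 * (deg G v : ℤ) * z v + 3 * ∑ w ∈ nbr G v, z w = 0) :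
    ∀ v : V, z v = 0 := by
  have key : ∀ (k : ℕ) (z : V → ℤ),
      (∀ v : V, 2 * (deg G v : ℤ) * z v + 3 * ∑ w ∈ nbr G v, z w = 0) →
      ∀ v : V, (3 : ℤ) ^ k ∣ z v := by
    intro k
    induction k with
    | zero => intro z _ v; simp
    | succ k ih =>
      intro z hz v
      have hdvd := dvd_three_of_eq G hiso hmax h33 z hz
      set z' : V → ℤ := fun v => z v / 3 with hz'def
      have hz3 : ∀ v, z v = 3 * z' v := fun v => (Int.mul_ediv_cancel' (hdvd v)).symm
      have heq' : ∀ v : V, 2 * (deg G v : ℤ) * z' v + 3 * ∑ w ∈ nbr G v, z' w = 0 := by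
        intro v
        have h := hz v
        have hs : ∑ w ∈ nbr G v, z w = 3 * ∑ w ∈ nbr G v, z' w := by
          rw [Finset.mul_sum]; exact Finset.sum_congr rfl fun w _ => hz3 w
        rw [hz3 v, hs] at h
        linarith
      have := ih z' heq' v
      rw [hz3 v, pow_succ, mul_comm ((3:ℤ)^k) 3]
      exact mul_dvd_mul_left 3 this
  intro v
  have hbig : ∀ k : ℕ, (3 : ℤ) ^ k ∣ z v := fun k => key k z heq v
  by_contra h0
  have hk := hbig ((z v).natAbs)
  have hlt : |z v| < (3 : ℤ) ^ (z v).natAbs := by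
    rw [Int.abs_eq_natAbs]
    exact_mod_cast Nat.lt_pow_self (n := (z v).natAbs) (by norm_num : 1 < 3)
  exact h0 (Int.eq_zero_of_abs_lt_dvd hk hlt)

/-- Let `G` be a finite simple connected graph without isolated vertices in which every
vertex has degree at most 3 and no two vertices of degree 3 are adjacent.  If
`lam : V → ℝ` satisfies the 5/3-eigenvalue equation, then `lam` is identically `0`. -/
theorem eigen_five_thirds_real_eq_zero {V : Type*} [Fintype V] (G : SimpleGraph V)
    (hconn : G.Connected)
    (hiso : ∀ v : V, 0 < deg G v)
    (hmax : ∀ v : V, deg G v ≤ 3)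
    (h33 : ∀ v w : V, G.Adj v w → ¬(deg G v = 3 ∧ deg G w = 3))
    (lam : V → ℝ) (hlam : EigenEq G lam) :
    ∀ v : V, lam v = 0 := by
  classical
  by_contra hne
  push_neg at hne
  have hlam0 : lam ≠ 0 := by
    obtain ⟨v, hv⟩ := hne
    intro h; exact hv (congrFun h v)
  -- the rational matrix 2D + 3A
  set M : Matrix V V ℚ := Matrix.of
    (fun v w => (if w = v then (2 * (deg G v : ℚ)) else 0)
      + (if w ∈ nbr G v then 3 else 0)) with hM
  -- its real version kills lam
  have hmulR : (M.map ((Rat.castHom ℝ : ℚ →+* ℝ) : ℚ → ℝ)).mulVec lam = 0 := by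
    funext v
    have hexp : (M.map ((Rat.castHom ℝ : ℚ →+* ℝ) : ℚ → ℝ)).mulVec lam v
        = 2 * (deg G v : ℝ) * lam v + 3 * ∑ w ∈ nbr G v, lam w := by
      simp only [Matrix.mulVec, dotProduct, Matrix.map_apply, hM, Matrix.of_apply, Rat.coe_castHom]
      push_cast [apply_ite (fun q : ℚ => (q : ℝ)), add_mul, ite_mul, zero_mul,
        Finset.sum_add_distrib, Finset.sum_ite_eq' Finset.univ v, Finset.sum_ite_mem,
        Finset.univ_inter, Finset.mul_sum, Finset.mem_univ, if_true]
      rfl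
    have h := hlam v
    rw [Finset.sum_sub_distrib, Finset.sum_const, nsmul_eq_mul] at h
    have hcard : ((nbr G v).card : ℝ) = (deg G v : ℝ) := by norm_cast
    rw [hcard] at h
    simp only [Pi.zero_apply]
    rw [hexp]; linarith
  -- hence the rational determinant vanishes
  have hdetR : (M.map ((Rat.castHom ℝ : ℚ →+* ℝ) : ℚ → ℝ)).det = 0 :=
    Matrix.exists_mulVec_eq_zero_iff.mp ⟨lam, hlam0, hmulR⟩
  have hdetQ : M.det = 0 := by
    have h1 : ((M.det : ℚ) : ℝ) = (M.map ((Rat.castHom ℝ : ℚ →+* ℝ) : ℚ → ℝ)).det :=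
      RingHom.map_det (Rat.castHom ℝ) M
    rw [hdetR] at h1
    exact_mod_cast h1
  -- so there is a nonzero rational kernel vector
  obtain ⟨x, hx0, hxeq⟩ := Matrix.exists_mulVec_eq_zero_iff.mpr hdetQ
  have hexpQ : ∀ v : V, 2 * (deg G v : ℚ) * x v + 3 * ∑ w ∈ nbr G v, x w = 0 := by
    intro v
    have h := congrFun hxeq v
    have hexp : M.mulVec x v = 2 * (deg G v : ℚ) * x v + 3 * ∑ w ∈ nbr G v, x w := by
      simp only [Matrix.mulVec, dotProduct, hM, Matrix.of_apply]
      simp only [add_mul, ite_mul, zero_mul, Finset.sum_add_distrib]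
      rw [Finset.sum_ite_eq' Finset.univ v (fun w => 2 * (deg G v : ℚ) * x w)]
      rw [Finset.sum_ite_mem, Finset.univ_inter, Finset.mul_sum]
      simp
    rw [hexp] at h
    simpa using h
  -- clear denominators
  set n : ℕ := ∏ v : V, (x v).den with hn
  have hnpos : 0 < n := Finset.prod_pos fun v _ => (x v).pos
  have hzex : ∀ v : V, ∃ zv : ℤ, (zv : ℚ) = x v * n := by
    intro v
    obtain ⟨m, hm⟩ : ((x v).den : ℤ) ∣ (n : ℤ) := by
      exact_mod_cast Int.natCast_dvd_natCast.mpr (Finset.dvd_prod_of_mem _ (Finset.mem_univ v))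
    refine ⟨(x v).num * m, ?_⟩
    have hden : (x v) * ((x v).den : ℚ) = ((x v).num : ℚ) := by
      nth_rewrite 1 [← Rat.num_div_den (x v)]
      rw [div_mul_cancel₀]
      exact Nat.cast_ne_zero.mpr (x v).den_nz
    have : ((n : ℤ) : ℚ) = ((x v).den : ℚ) * (m : ℚ) := by exact_mod_cast congrArg (fun t : ℤ => (t : ℚ)) hm
    push_cast
    push_cast at this
    rw [this, ← mul_assoc, hden]
  choose z hz using hzex
  have hzeq : ∀ v : V, 2 * (deg G v : ℤ) * z v + 3 * ∑ w ∈ nbr G v, z w = 0 := by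
    intro v
    have : ((2 * (deg G v : ℤ) * z v + 3 * ∑ w ∈ nbr G v, z w : ℤ) : ℚ) = 0 := by
      push_cast
      rw [hz v]
      have hs : ∑ w ∈ nbr G v, (z w : ℚ) = (∑ w ∈ nbr G v, x w) * n := by
        rw [Finset.sum_mul]; exact Finset.sum_congr rfl fun w _ => hz w
      rw [hs]
      have := hexpQ v
      ring_nf
      ring_nf at this
      nlinarith [this]
    exact_mod_cast this
  have hzzero := int_sol_zero G hiso hmax h33 z hzeq
  -- contradiction with x ≠ 0
  obtain ⟨v, hv⟩ := Function.ne_iff.mp hx0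
  apply hv
  have : (z v : ℚ) = 0 := by rw [hzzero v]; norm_num
  rw [hz v] at this
  have hn0 : (n : ℚ) ≠ 0 := by positivity
  simpa [hn0] using this
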